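/- arXiv:2503.10963 — 4 statements merged into one kernel-verified Lean document; each statement's English description precedes it below -/
import Mathlib

section
/- In the simplex category Δ, monomorphisms are stable under pushout along epimorphisms: if a commutative square in Δ with top map a monomorphism i : a ⟶ b and left map an epimorphism e : a ⟶ c is a pushout square, then the bottom map c ⟶ d of the square is a monomorphism. -/
open CategoryTheory

lemma simplexCategory_split_of_mono {a b : SimplexCategory} (i : a ⟶ b) (hi : Mono i) :
    ∃ p : b ⟶ a, i ≫ p = 𝟙 a := by
  have hinj : Function.Injective i.toOrderHom :=
    SimplexCategory.mono_iff_injective.mp hi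
  have hsm : StrictMono i.toOrderHom := i.toOrderHom.monotone.strictMono_of_injective hinj
  set S : Fin (b.len + 1) → Finset (Fin (a.len + 1)) :=
    fun y => Finset.univ.filter (fun x => i.toOrderHom x ≤ y) with hS
  let g : Fin (b.len + 1) → Fin (a.len + 1) :=
    fun y => if h : (S y).Nonempty then (S y).max' h else 0
  have hmono : Monotone g := by
    intro y y' hyy
    have hsub : S y ⊆ S y' := by
      intro x hx
      simp only [hS, Finset.mem_filter] at hx ⊢
      exact ⟨hx.1, hx.2.trans hyy⟩
    by_cases h : (S y).Nonempty
    · have h' : (S y').Nonempty := h.mono hsub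
      simp only [g, dif_pos h, dif_pos h']
      exact Finset.max'_subset h hsub
    · simp only [g, dif_neg h]
      exact Fin.zero_le _
  have hret : ∀ x, g (i.toOrderHom x) = x := by
    intro x
    have hx : x ∈ S (i.toOrderHom x) := by
      simp [hS]
    have h : (S (i.toOrderHom x)).Nonempty := ⟨x, hx⟩
    simp only [g, dif_pos h]
    apply le_antisymm
    · apply Finset.max'_le
      intro x' hx'
      simp only [hS, Finset.mem_filter] at hx'
      exact hsm.le_iff_le.mp hx'.2
    · exact Finset.le_max' _ _ hx
  refine ⟨SimplexCategory.Hom.mk ⟨g, hmono⟩, ?_⟩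
  apply SimplexCategory.Hom.ext
  ext x
  simp only [SimplexCategory.comp_toOrderHom, SimplexCategory.id_toOrderHom, OrderHom.comp_coe,
    Function.comp_apply, OrderHom.id_coe, id_eq, SimplexCategory.Hom.toOrderHom_mk]
  exact congrArg Fin.val (hret x)

/-- In the simplex category `Δ`, monomorphisms are stable under
pushout along epimorphisms: if a commutative square with top map a monomorphism
`i : a ⟶ b` and left map an epimorphism `e : a ⟶ c` is a pushout square, then the
bottom map `m : c ⟶ d` of the square is a monomorphism. -/
theorem simplexCategory_mono_pushout_along_epi
    {a b c d : SimplexCategory} (i : a ⟶ b) (e : a ⟶ c)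
    (r : b ⟶ d) (m : c ⟶ d)
    (hi : Mono i) (he : Epi e) (h : IsPushout i e r m) :
    Mono m := by
  obtain ⟨p, hp⟩ := simplexCategory_split_of_mono i hi
  have w : i ≫ (p ≫ e) = e ≫ 𝟙 c := by
    rw [← Category.assoc, hp, Category.id_comp, Category.comp_id]
  have : m ≫ h.desc (p ≫ e) (𝟙 c) w = 𝟙 c := h.inr_desc _ _ _
  exact mono_of_mono_fac this
end

section
/- If a functor R : E ⥤ F is a local right adjoint, then for any category I the induced functor R_* : E^I ⥤ F^I on diagram categories, given by postcomposition with R, is a local right adjoint. -/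
open CategoryTheory

universe v₁ v₂ v₃ u₁ u₂ u₃

/-- A morphism `g : A ⟶ R.obj X` is `R`-generic if every commutative square
`α ≫ R.map γ = g ≫ R.map β` admits a unique filler `δ : X ⟶ X'` with
`g ≫ R.map δ = α` and `δ ≫ γ = β`. -/
def CategoryTheory.Functor.IsGenericHom {E : Type u₁} {F : Type u₂}
    [Category.{v₁} E] [Category.{v₂} F] (R : E ⥤ F)
    {A : F} {X : E} (g : A ⟶ R.obj X) : Prop :=
  ∀ {X' Y : E} (α : A ⟶ R.obj X') (β : X ⟶ Y) (γ : X' ⟶ Y),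
    α ≫ R.map γ = g ≫ R.map β →
      ∃! δ : X ⟶ X', g ≫ R.map δ = α ∧ δ ≫ γ = β

/-- A functor `R : E ⥤ F` is a local right adjoint if, for every object `X` of `E`,
the induced functor `E/X ⥤ F/R(X)` between slice categories has a left adjoint. -/
def CategoryTheory.Functor.IsLocalRightAdjoint {E : Type u₁} {F : Type u₂}
    [Category.{v₁} E] [Category.{v₂} F] (R : E ⥤ F) : Prop :=
  ∀ X : E, (Over.post (X := X) R).IsRightAdjoint

/-!
The slice functor `E/X ⥤ F/R(X)` has a left adjoint exactly when every `f : A ⟶ R(X)` has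
an initial factorization `A ⟶ R(B) ⟶ R(X)`, and the initial factorizations are precisely the
generic ones. Generic morphisms into a diagram `R ∘ B` are detected pointwise, and pointwise
generic factorizations of a natural transformation assemble into a diagram, because the
transition maps are the unique fillers provided by genericity.
-/

namespace CategoryTheory.Functor

open Limits

variable {E : Type u₁} {F : Type u₂} [Category.{v₁} E] [Category.{v₂} F] (R : E ⥤ F)

/-- `(g, h)` is initial among the factorizations of `g ≫ R.map h` through `R.map (_ : _ ⟶ X)`,
i.e. in `StructuredArrow (Over.mk (g ≫ R.map h)) (Over.post R)`. -/
def IsInitialFactorization {A : F} {B X : E} (g : A ⟶ R.obj B) (h : B ⟶ X) : Prop :=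
  ∀ ⦃C : E⦄ (c : C ⟶ X) (ψ : A ⟶ R.obj C), ψ ≫ R.map c = g ≫ R.map h →
    ∃! δ : B ⟶ C, g ≫ R.map δ = ψ ∧ δ ≫ c = h

structure GenericFactorization {A : F} {X : E} (f : A ⟶ R.obj X) where
  mid : E
  gen : A ⟶ R.obj mid
  hom : mid ⟶ X
  fac : gen ≫ R.map hom = f
  isGeneric : R.IsGenericHom gen

namespace GenericFactorization

variable {R} {A : F} {X : E} {f : A ⟶ R.obj X} (φ : R.GenericFactorization f) {X' Y : E}
  (α : A ⟶ R.obj X') (β : φ.mid ⟶ Y) (γ : X' ⟶ Y) (w : α ≫ R.map γ = φ.gen ≫ R.map β)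

noncomputable def lift : φ.mid ⟶ X' :=
  (φ.isGeneric α β γ w).exists.choose

lemma gen_lift : φ.gen ≫ R.map (φ.lift α β γ w) = α :=
  (φ.isGeneric α β γ w).exists.choose_spec.1

lemma lift_comp : φ.lift α β γ w ≫ γ = β :=
  (φ.isGeneric α β γ w).exists.choose_spec.2

end GenericFactorization

variable {R}

section Generic

variable {A : F} {B : E} {g : A ⟶ R.obj B}

lemma IsGenericHom.isInitialFactorization (hg : R.IsGenericHom g) {X : E} (h : B ⟶ X) :
    R.IsInitialFactorization g h :=
  fun _ c ψ w => hg ψ h c w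

lemma IsGenericHom.hom_ext (hg : R.IsGenericHom g) {X' Y : E} {d₁ d₂ : B ⟶ X'} (γ : X' ⟶ Y)
    (h₁ : g ≫ R.map d₁ = g ≫ R.map d₂) (h₂ : d₁ ≫ γ = d₂ ≫ γ) : d₁ = d₂ :=
  (hg (g ≫ R.map d₁) (d₁ ≫ γ) γ (by simp)).unique ⟨rfl, rfl⟩ ⟨h₁.symm, h₂.symm⟩

end Generic

lemma IsInitialFactorization.isGenericHom
    (hR : ∀ {A : F} {Y : E} (f : A ⟶ R.obj Y),
      ∃ (B : E) (g : A ⟶ R.obj B) (h : B ⟶ Y), R.IsInitialFactorization g h ∧ g ≫ R.map h = f)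
    {A : F} {B X : E} {g : A ⟶ R.obj B} {h : B ⟶ X} (hgh : R.IsInitialFactorization g h) :
    R.IsGenericHom g := by
  intro X' Y α β γ w
  -- `(g, β)` is a retract of an initial factorization `(g', h')` of `g ≫ R.map β` over `Y`,
  -- hence initial itself; the section `s` comes from the initiality of `(g, h)`.
  obtain ⟨B', g', h', hgh', fac'⟩ := hR (g ≫ R.map β)
  obtain ⟨p, ⟨hp₁, hp₂⟩, -⟩ := hgh' β g fac'.symm
  obtain ⟨s, ⟨hs₁, hs₂⟩, -⟩ := hgh (p ≫ h) g' (by rw [R.map_comp, ← Category.assoc, hp₁])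
  have hsp : s ≫ p = 𝟙 B :=
    (hgh h g rfl).unique ⟨by rw [R.map_comp, ← Category.assoc, hs₁, hp₁], by simpa using hs₂⟩
      ⟨by simp, by simp⟩
  obtain ⟨q, ⟨hq₁, hq₂⟩, hq⟩ := hgh' γ α (w.trans fac'.symm)
  refine ⟨s ≫ q, ⟨by rw [R.map_comp, ← Category.assoc, hs₁, hq₁], ?_⟩, fun d ⟨hd₁, hd₂⟩ => ?_⟩
  · rw [Category.assoc, hq₂, ← hp₂, ← Category.assoc, hsp, Category.id_comp]
  · have hpd : p ≫ d = q :=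
      hq _ ⟨by rw [R.map_comp, ← Category.assoc, hp₁, hd₁], by rw [Category.assoc, hd₂, hp₂]⟩
    rw [← hpd, ← Category.assoc, hsp, Category.id_comp]

section Slice

variable {X : E} {O : Over (R.obj X)}

lemma isInitialFactorization_of_isInitial {S : StructuredArrow O (Over.post R)}
    (hS : IsInitial S) : R.IsInitialFactorization S.hom.left S.right.hom := by
  intro C c ψ w
  have hψ : ψ ≫ R.map c = O.hom := w.trans (Over.w S.hom)
  let T : StructuredArrow O (Over.post R) :=
    .mk (Over.homMk ψ hψ : O ⟶ (Over.post R).obj (Over.mk c))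
  refine ⟨(hS.to T).right.left, ⟨?_, ?_⟩, fun d ⟨hd₁, hd₂⟩ => ?_⟩
  · exact congrArg (fun m => m.left) (StructuredArrow.w (hS.to T))
  · exact Over.w (hS.to T).right
  · let m : S ⟶ T := StructuredArrow.homMk (Over.homMk d hd₂) (by ext; exact hd₁)
    exact congrArg (fun m => m.right.left) (hS.hom_ext m (hS.to T))

lemma hasInitial_of_isInitialFactorization {B : E} {g : O.left ⟶ R.obj B} {h : B ⟶ X}
    (w : g ≫ R.map h = O.hom) (H : R.IsInitialFactorization g h) :
    HasInitial (StructuredArrow O (Over.post R)) := by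
  have H' (T : StructuredArrow O (Over.post R)) :=
    H T.right.hom T.hom.left ((Over.w T.hom).trans w.symm)
  let S : StructuredArrow O (Over.post R) :=
    .mk (Over.homMk g w : O ⟶ (Over.post R).obj (Over.mk h))
  refine IsInitial.hasInitial (X := S) (IsInitial.ofUniqueHom
    (fun T => StructuredArrow.homMk (Over.homMk _ (H' T).exists.choose_spec.2)
      (by ext; exact (H' T).exists.choose_spec.1))
    (fun T m => ?_))
  ext
  exact (H' T).unique ⟨congrArg (fun m => m.left) (StructuredArrow.w m), Over.w m.right⟩
    (H' T).exists.choose_spec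

end Slice

theorem isLocalRightAdjoint_iff_nonempty_genericFactorization :
    R.IsLocalRightAdjoint ↔
      ∀ {A : F} {X : E} (f : A ⟶ R.obj X), Nonempty (R.GenericFactorization f) := by
  constructor
  · intro hR
    have hinit {A : F} {X : E} (f : A ⟶ R.obj X) :
        ∃ (B : E) (g : A ⟶ R.obj B) (h : B ⟶ X),
          R.IsInitialFactorization g h ∧ g ≫ R.map h = f := by
      have := isRightAdjoint_iff_hasInitial_structuredArrow.mp (hR X) (Over.mk f)
      let S := ⊥_ (StructuredArrow (Over.mk f) (Over.post R))
      exact ⟨_, _, _, isInitialFactorization_of_isInitial initialIsInitial, Over.w S.hom⟩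
    intro A X f
    obtain ⟨B, g, h, hgh, fac⟩ := hinit f
    exact ⟨⟨B, g, h, fac, hgh.isGenericHom hinit⟩⟩
  · intro H X
    rw [isRightAdjoint_iff_hasInitial_structuredArrow]
    intro O
    obtain ⟨φ⟩ := H O.hom
    exact hasInitial_of_isInitialFactorization φ.fac
      (IsGenericHom.isInitialFactorization φ.isGeneric _)

section Diagram

variable {I : Type u₃} [Category.{v₃} I]

lemma isGenericHom_whiskeringRight_obj {A : I ⥤ F} {B : I ⥤ E} (g : A ⟶ B ⋙ R)
    (hg : ∀ i, R.IsGenericHom (g.app i)) : ((whiskeringRight I E F).obj R).IsGenericHom g := by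
  intro X' Y α β γ w
  choose δ hδ₁ hδ₂ using fun i => (hg i _ _ _ (NatTrans.congr_app w i)).exists
  have hα {i j : I} (u : i ⟶ j) : A.map u ≫ α.app j = α.app i ≫ R.map (X'.map u) :=
    α.naturality u
  have hgu {i j : I} (u : i ⟶ j) : A.map u ≫ g.app j = g.app i ≫ R.map (B.map u) := g.naturality u
  refine ⟨⟨δ, fun i j u => IsGenericHom.hom_ext (hg i) (γ.app j) ?_ ?_⟩, ⟨?_, ?_⟩, ?_⟩
  · rw [R.map_comp, R.map_comp, ← Category.assoc, ← hgu, Category.assoc, hδ₁,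
      ← Category.assoc, hδ₁, hα]
  · rw [Category.assoc, Category.assoc, hδ₂, γ.naturality, ← Category.assoc, hδ₂,
      β.naturality]
  · ext i
    exact hδ₁ i
  · ext i
    exact hδ₂ i
  · rintro d ⟨hd₁, hd₂⟩
    ext i
    exact IsGenericHom.hom_ext (hg i) (γ.app i) ((NatTrans.congr_app hd₁ i).trans (hδ₁ i).symm)
      ((NatTrans.congr_app hd₂ i).trans (hδ₂ i).symm)

variable {A : I ⥤ F} {X : I ⥤ E} {f : A ⟶ X ⋙ R} (φ : ∀ i, R.GenericFactorization (f.app i))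

namespace GenericFactorization

lemma transition_comm {i j : I} (u : i ⟶ j) :
    (A.map u ≫ (φ j).gen) ≫ R.map (φ j).hom = (φ i).gen ≫ R.map ((φ i).hom ≫ X.map u) := by
  rw [Category.assoc, (φ j).fac, R.map_comp, ← Category.assoc, (φ i).fac]
  exact f.naturality u

noncomputable def diagram : I ⥤ E where
  obj i := (φ i).mid
  map {i j} u := (φ i).lift _ _ _ (transition_comm φ u)
  map_id i := by
    refine IsGenericHom.hom_ext (φ i).isGeneric (φ i).hom ?_ ?_
    · simp [gen_lift]
    · simp [lift_comp]
  map_comp {i j k} u v := by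
    refine IsGenericHom.hom_ext (φ i).isGeneric (φ k).hom ?_ ?_
    · rw [gen_lift, R.map_comp, ← Category.assoc, gen_lift, Category.assoc, gen_lift]
      simp
    · rw [lift_comp, Category.assoc, lift_comp, ← Category.assoc, lift_comp]
      simp

noncomputable def ofApp : ((whiskeringRight I E F).obj R).GenericFactorization f where
  mid := diagram φ
  gen :=
    { app := fun i => (φ i).gen
      naturality := fun _ _ u => ((φ _).gen_lift _ _ _ (transition_comm φ u)).symm }
  hom :=
    { app := fun i => (φ i).hom
      naturality := fun _ _ u => (φ _).lift_comp _ _ _ (transition_comm φ u) }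
  fac := by
    ext i
    exact (φ i).fac
  isGeneric := isGenericHom_whiskeringRight_obj _ fun i => (φ i).isGeneric

end GenericFactorization

end Diagram

end CategoryTheory.Functor

/-- If `R : E ⥤ F` is a local right adjoint, then so is the induced
functor `R_* : E^I ⥤ F^I` on diagram categories, given by postcomposition with `R`. -/
theorem isLocalRightAdjoint_whiskeringRight
    {E : Type u₁} {F : Type u₂} [Category.{v₁} E] [Category.{v₂} F]
    (R : E ⥤ F) (hR : R.IsLocalRightAdjoint)
    (I : Type u₃) [Category.{v₃} I] :
    ((Functor.whiskeringRight I E F).obj R).IsLocalRightAdjoint := by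
  rw [Functor.isLocalRightAdjoint_iff_nonempty_genericFactorization] at hR ⊢
  intro A X f
  exact ⟨.ofApp fun i => (hR (f.app i)).some⟩
end

section
/- Let R : E ⥤ F be a functor and let D : I ⥤ F and D' : I ⥤ E be diagrams whose colimits exist. Given a natural transformation ρ : D ⟶ D' ⋙ R such that each component ρ_i : D_i ⟶ R(D'_i) is R-generic, the canonical morphism colim_I D ⟶ R(colim_I D') (induced on the colimit by the morphisms R(ι'_i) ∘ ρ_i, where ι'_i are the colimit inclusions of D') is R-generic. -/
open CategoryTheory CategoryTheory.Limits

universe v₁ v₂ v₃ u₁ u₂ u₃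

/-- The canonical morphism `colim D ⟶ R (colim D')` induced by a natural transformation
`ρ : D ⟶ D' ⋙ R`, namely the one induced on the colimit by the morphisms
`ρ_i ≫ R.map (colimit.ι D' i)`. -/
noncomputable def canonicalColimitMap {E : Type u₁} {F : Type u₂} {I : Type u₃}
    [Category.{v₁} E] [Category.{v₂} F] [Category.{v₃} I]
    (R : E ⥤ F) (D : I ⥤ F) (D' : I ⥤ E) [HasColimit D] [HasColimit D']
    (ρ : D ⟶ D' ⋙ R) : colimit D ⟶ R.obj (colimit D') :=
  colimit.desc D
    { pt := R.obj (colimit D')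
      ι :=
        { app := fun i => ρ.app i ≫ R.map (colimit.ι D' i)
          naturality := fun i j φ => by
            have h := ρ.naturality φ
            dsimp at h ⊢
            rw [Category.comp_id, ← Category.assoc, h, Category.assoc, ← R.map_comp,
              colimit.w] } }

/-- Given diagrams `D : I ⥤ F` and `D' : I ⥤ E` whose colimits exist
and a natural transformation `ρ : D ⟶ D' ⋙ R` all of whose components are `R`-generic,
the canonical morphism `colim D ⟶ R (colim D')` is `R`-generic. -/
theorem isGenericHom_canonicalColimitMap {E : Type u₁} {F : Type u₂} {I : Type u₃}
    [Category.{v₁} E] [Category.{v₂} F] [Category.{v₃} I]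
    (R : E ⥤ F) (D : I ⥤ F) (D' : I ⥤ E) [HasColimit D] [HasColimit D']
    (ρ : D ⟶ D' ⋙ R)
    (h : ∀ i : I, R.IsGenericHom (X := D'.obj i) (ρ.app i)) :
    R.IsGenericHom (canonicalColimitMap R D D' ρ) := by
  intro X' Y α β γ hsq
  -- key: components of the square
  have hι : ∀ i, colimit.ι D i ≫ canonicalColimitMap R D D' ρ =
      ρ.app i ≫ R.map (colimit.ι D' i) := fun i => colimit.ι_desc _ i
  have hsq' : ∀ i, (colimit.ι D i ≫ α) ≫ R.map γ =
      ρ.app i ≫ R.map (colimit.ι D' i ≫ β) := by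
    intro i
    rw [R.map_comp, Category.assoc, hsq, ← Category.assoc, ← Category.assoc, hι]
  choose δ hδ huniq using fun i => h i (colimit.ι D i ≫ α) (colimit.ι D' i ≫ β) γ (hsq' i)
  -- cocone compatibility
  have hcomp : ∀ {i j : I} (φ : i ⟶ j), D'.map φ ≫ δ j = δ i := by
    intro i j φ
    apply huniq
    constructor
    · rw [R.map_comp, ← Category.assoc, show ρ.app i ≫ R.map (D'.map φ) = D.map φ ≫ ρ.app j
        from (ρ.naturality φ).symm, Category.assoc, (hδ j).1, ← Category.assoc, colimit.w]
    · rw [Category.assoc, (hδ j).2, ← Category.assoc, colimit.w]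
  refine ⟨colimit.desc D' ⟨X', ⟨fun i => δ i, fun i j φ => by
      dsimp; rw [Category.comp_id, hcomp φ]⟩⟩, ⟨?_, ?_⟩, ?_⟩
  · apply colimit.hom_ext
    intro i
    rw [← Category.assoc, hι, Category.assoc, ← R.map_comp, colimit.ι_desc, (hδ i).1]
  · apply colimit.hom_ext
    intro i
    rw [← Category.assoc, colimit.ι_desc]
    exact (hδ i).2
  · intro d ⟨hd1, hd2⟩
    apply colimit.hom_ext
    intro i
    rw [colimit.ι_desc]
    apply huniq
    constructor
    · rw [R.map_comp, ← Category.assoc, ← hι i, Category.assoc, hd1]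
    · rw [Category.assoc, hd2]
end

section
/- Let R : E ⥤ F be a functor with E a cocomplete category, and let D : I ⥤ F and D' : I ⥤ E be diagrams. Suppose ρ : D ⟶ D' ⋙ R is a natural transformation such that every component ρ_i : D_i ⟶ R(D'_i) admits an R-generic factorisation, and suppose that colim_I D exists. Then the canonical morphism colim_I D ⟶ R(colim_I D') admits an R-generic factorisation. -/
open CategoryTheory CategoryTheory.Limits

universe v₁ v₂ v₃ u₁ u₂ u₃

/-- An `R`-generic factorisation of `f : A ⟶ R.obj Y` is a factorisation
`f = g ≫ R.map h` with `g` an `R`-generic morphism. -/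
def CategoryTheory.Functor.HasGenericFactorisation {E : Type u₁} {F : Type u₂}
    [Category.{v₁} E] [Category.{v₂} F] (R : E ⥤ F)
    {A : F} {Y : E} (f : A ⟶ R.obj Y) : Prop :=
  ∃ (X : E) (g : A ⟶ R.obj X) (h : X ⟶ Y),
    R.IsGenericHom g ∧ g ≫ R.map h = f

/-- **Statement 6.** Let `R : E ⥤ F` with `E` cocomplete, and let `D : I ⥤ F` and
`D' : I ⥤ E` be diagrams. If `ρ : D ⟶ D' ⋙ R` is a natural transformation all of whose
components admit `R`-generic factorisations, and the colimit of `D` exists, then the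
canonical morphism `colim D ⟶ R (colim D')` admits an `R`-generic factorisation. -/
theorem hasGenericFactorisation_canonicalColimitMap
    {E : Type u₁} {F : Type u₂} [Category.{v₁} E] [Category.{v₂} F]
    [HasColimitsOfSize.{v₃, u₃} E]
    {I : Type u₃} [Category.{v₃} I]
    (R : E ⥤ F) (D : I ⥤ F) (D' : I ⥤ E) [HasColimit D]
    (ρ : D ⟶ D' ⋙ R)
    (h : ∀ i : I, R.HasGenericFactorisation (Y := D'.obj i) (ρ.app i)) :
    R.HasGenericFactorisation (canonicalColimitMap R D D' ρ) := by
  classical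
  choose G g k hgen hfac using h
  -- fillers for squares induced by morphisms of `I`
  have key : ∀ {i j : I} (φ : i ⟶ j), ∃! δ : G i ⟶ G j,
      g i ≫ R.map δ = D.map φ ≫ g j ∧ δ ≫ k j = k i ≫ D'.map φ := by
    intro i j φ
    apply hgen i (D.map φ ≫ g j) (k i ≫ D'.map φ) (k j)
    have hnat := ρ.naturality φ
    dsimp at hnat
    rw [Category.assoc, hfac j, hnat, ← hfac i, Category.assoc, ← R.map_comp]
  -- the functor of generic objects
  let Gf : I ⥤ E :=
  { obj := G
    map := fun {i j} φ => (key φ).choose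
    map_id := fun i => by
      refine ((key (𝟙 i)).choose_spec.2 (𝟙 (G i)) ⟨by simp, by simp⟩).symm
    map_comp := fun {i j l} φ ψ => by
      refine ((key (φ ≫ ψ)).choose_spec.2 ((key φ).choose ≫ (key ψ).choose)
        ⟨?_, ?_⟩).symm
      · rw [R.map_comp, ← Category.assoc, (key φ).choose_spec.1.1,
          Category.assoc, (key ψ).choose_spec.1.1, ← Category.assoc, ← D.map_comp]
      · rw [Category.assoc, (key ψ).choose_spec.1.2, ← Category.assoc,
          (key φ).choose_spec.1.2, Category.assoc, ← D'.map_comp] }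
  have hGf1 : ∀ {i j : I} (φ : i ⟶ j), g i ≫ R.map (Gf.map φ) = D.map φ ≫ g j :=
    fun φ => (key φ).choose_spec.1.1
  have hGf2 : ∀ {i j : I} (φ : i ⟶ j), Gf.map φ ≫ k j = k i ≫ D'.map φ :=
    fun φ => (key φ).choose_spec.1.2
  -- the generic morphism
  let gbar : colimit D ⟶ R.obj (colimit Gf) := colimit.desc D
    { pt := R.obj (colimit Gf)
      ι :=
      { app := fun i => g i ≫ R.map (colimit.ι Gf i)
        naturality := fun i j φ => by
          dsimp
          rw [Category.comp_id, ← Category.assoc, ← hGf1 φ, Category.assoc,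
            ← R.map_comp, colimit.w] } }
  have hgbar : ∀ i : I, colimit.ι D i ≫ gbar = g i ≫ R.map (colimit.ι Gf i) :=
    fun i => colimit.ι_desc _ i
  -- the other part of the factorisation
  let hbar : colimit Gf ⟶ colimit D' := colimit.desc Gf
    { pt := colimit D'
      ι :=
      { app := fun i => k i ≫ colimit.ι D' i
        naturality := fun i j φ => by
          dsimp
          rw [Category.comp_id, ← Category.assoc, hGf2 φ, Category.assoc,
            colimit.w] } }
  have hhbar : ∀ i : I, colimit.ι Gf i ≫ hbar = k i ≫ colimit.ι D' i :=
    fun i => colimit.ι_desc _ i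
  refine ⟨colimit Gf, gbar, hbar, ?_, ?_⟩
  · -- genericity
    intro X' Y α β γ hsq
    have keyi : ∀ i : I, ∃! δ : G i ⟶ X',
        g i ≫ R.map δ = colimit.ι D i ≫ α ∧ δ ≫ γ = colimit.ι Gf i ≫ β := by
      intro i
      apply hgen i (colimit.ι D i ≫ α) (colimit.ι Gf i ≫ β) γ
      rw [Category.assoc, hsq, ← Category.assoc, hgbar i, Category.assoc,
        ← R.map_comp]
    let δ : ∀ i : I, G i ⟶ X' := fun i => (keyi i).choose
    have hδ1 : ∀ i, g i ≫ R.map (δ i) = colimit.ι D i ≫ α :=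
      fun i => (keyi i).choose_spec.1.1
    have hδ2 : ∀ i, δ i ≫ γ = colimit.ι Gf i ≫ β :=
      fun i => (keyi i).choose_spec.1.2
    have hδu : ∀ i (y : G i ⟶ X'),
        (g i ≫ R.map y = colimit.ι D i ≫ α ∧ y ≫ γ = colimit.ι Gf i ≫ β) →
        y = δ i := fun i => (keyi i).choose_spec.2
    have hcone : ∀ {i j : I} (φ : i ⟶ j), Gf.map φ ≫ δ j = δ i := by
      intro i j φ
      refine hδu i _ ⟨?_, ?_⟩
      · rw [R.map_comp, ← Category.assoc, hGf1 φ, Category.assoc, hδ1 j,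
          ← Category.assoc, colimit.w]
      · rw [Category.assoc, hδ2 j, ← Category.assoc, colimit.w]
    let δbar : colimit Gf ⟶ X' := colimit.desc Gf
      { pt := X'
        ι :=
        { app := δ
          naturality := fun i j φ => by
            dsimp
            rw [Category.comp_id, hcone φ] } }
    have hδbar : ∀ i : I, colimit.ι Gf i ≫ δbar = δ i := fun i => colimit.ι_desc _ i
    refine ⟨δbar, ⟨?_, ?_⟩, ?_⟩
    · apply colimit.hom_ext
      intro i
      rw [← Category.assoc, hgbar i, Category.assoc, ← R.map_comp, hδbar i, hδ1 i]
    · apply colimit.hom_ext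
      intro i
      rw [← Category.assoc, hδbar i, hδ2 i]
    · intro δ' ⟨h1, h2⟩
      apply colimit.hom_ext
      intro i
      rw [hδbar i]
      refine hδu i _ ⟨?_, ?_⟩
      · rw [R.map_comp, ← Category.assoc, ← hgbar i, Category.assoc, h1]
      · rw [Category.assoc, h2]
  · -- factorisation
    apply colimit.hom_ext
    intro i
    rw [← Category.assoc, hgbar i, Category.assoc, ← R.map_comp, hhbar i,
      R.map_comp, ← Category.assoc, hfac i]
    simp [canonicalColimitMap]
end
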